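/- Let G = (L, R, E) be a bipartite graph with finite vertex sets L and R and edge set E ⊆ L × R, let p : R → ℝ with p(v) ≥ 0, and let f_{G,p} : Finset L → ℝ be the coverage function f_{G,p}(S) = Σ_{v ∈ N(S)} p(v), where N(S) = { v ∈ R : ∃ u ∈ S, (u,v) ∈ E }. Then the extension by expectation F of f_{G,p} has the closed form: for every y ∈ [0,1]^L, F(y) = Σ_{v ∈ R} p(v) · ( 1 − Π_{u ∈ N(v)} (1 − y_u) ), where N(v) = { u ∈ L : (u,v) ∈ E }. -/

import Mathlib

open scoped Classical

/-- The extension by expectation (multilinear extension) of a set function. -/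
noncomputable def mulExt {L : Type*} [Fintype L] [DecidableEq L]
    (f : Finset L → ℝ) (y : L → ℝ) : ℝ :=
  ∑ S : Finset L, f S * ((∏ u ∈ S, y u) * ∏ u ∈ Sᶜ, (1 - y u))

/-- The weighted coverage function of a bipartite graph `G = (L, R, E)`:
`coverFn E p S` is the total profit of the vertices of `R` that have a
neighbor in `S`. -/
noncomputable def coverFn {L R : Type*} [Fintype R]
    (E : Finset (L × R)) (p : R → ℝ) (S : Finset L) : ℝ :=
  ∑ v ∈ Finset.univ.filter (fun v : R => ∃ u ∈ S, (u, v) ∈ E), p v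

/-! Writing `f_{G,p}(S) = ∑ᵥ p(v) (1 - [S ∩ N(v) = ∅])` and using linearity of the extension by
expectation reduces the claim to two facts about the product weights
`w(S) = ∏_{u ∈ S} y_u ∏_{u ∉ S} (1 - y_u)`: they sum to `1`, and the sets avoiding `A` carry total
weight `∏_{u ∈ A} (1 - y_u)`. Both follow from expanding `∏_{u ∈ B} (y_u + (1 - y_u)) = 1`. -/

open Finset

section MulExt

variable {L : Type*} [Fintype L] [DecidableEq L]

theorem sum_powerset_prod_mul_prod_compl (y : L → ℝ) (B : Finset L) :
    ∑ S ∈ B.powerset, (∏ u ∈ S, y u) * ∏ u ∈ Sᶜ, (1 - y u) = ∏ u ∈ Bᶜ, (1 - y u) := by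
  have split : ∀ S ∈ B.powerset, (∏ u ∈ S, y u) * ∏ u ∈ Sᶜ, (1 - y u) =
      ((∏ u ∈ S, y u) * ∏ u ∈ B \ S, (1 - y u)) * ∏ u ∈ Bᶜ, (1 - y u) := by
    intro S hS
    rw [← prod_sdiff (compl_subset_compl.2 (mem_powerset.1 hS)), compl_sdiff_compl, mul_assoc]
  rw [sum_congr rfl split, ← sum_mul, ← prod_add]
  simp

theorem mulExt_sum {ι : Type*} (s : Finset ι) (f : ι → Finset L → ℝ) (y : L → ℝ) :
    mulExt (fun S => ∑ i ∈ s, f i S) y = ∑ i ∈ s, mulExt (f i) y := by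
  simp only [mulExt, sum_mul]
  exact sum_comm

theorem mulExt_const_mul (c : ℝ) (f : Finset L → ℝ) (y : L → ℝ) :
    mulExt (fun S => c * f S) y = c * mulExt f y := by
  simp only [mulExt, mul_sum, mul_assoc]

theorem mulExt_sub (f g : Finset L → ℝ) (y : L → ℝ) :
    mulExt (fun S => f S - g S) y = mulExt f y - mulExt g y := by
  simp only [mulExt, sub_mul, sum_sub_distrib]

theorem mulExt_one (y : L → ℝ) : mulExt (fun _ => 1) y = 1 := by
  simpa [mulExt] using sum_powerset_prod_mul_prod_compl y univ

theorem mulExt_indicator_disjoint (A : Finset L) (y : L → ℝ) :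
    mulExt (fun S => if Disjoint S A then 1 else 0) y = ∏ u ∈ A, (1 - y u) := by
  have avoiding : univ.filter (fun S : Finset L => Disjoint S A) = Aᶜ.powerset := by
    ext S
    simp [subset_compl_iff_disjoint_right]
  simp only [mulExt, ite_mul, one_mul, zero_mul]
  rw [← sum_filter, avoiding, sum_powerset_prod_mul_prod_compl, compl_compl]

end MulExt

theorem coverFn_eq_sum_indicator {L R : Type*} [Fintype L] [Fintype R] [DecidableEq L]
    [DecidableEq R] (E : Finset (L × R)) (p : R → ℝ) (S : Finset L) :
    coverFn E p S =
      ∑ v : R, p v *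
        (1 - if Disjoint S (univ.filter (fun u : L => (u, v) ∈ E)) then 1 else 0) := by
  rw [coverFn, sum_filter]
  refine sum_congr rfl fun v _ => ?_
  have avoids : Disjoint S (univ.filter (fun u : L => (u, v) ∈ E)) ↔ ¬∃ u ∈ S, (u, v) ∈ E := by
    simp [disjoint_left]
  by_cases h : ∃ u ∈ S, (u, v) ∈ E <;> simp [avoids, h]

theorem mulExt_coverFn_closed_form_general
    {L R : Type*} [Fintype L] [Fintype R] [DecidableEq L] [DecidableEq R]
    (E : Finset (L × R)) (p : R → ℝ)
    (y : L → ℝ) :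
    mulExt (coverFn E p) y =
      ∑ v : R, p v *
        (1 - ∏ u ∈ Finset.univ.filter (fun u : L => (u, v) ∈ E), (1 - y u)) := by
  simp only [funext (coverFn_eq_sum_indicator E p), mulExt_sum, mulExt_const_mul, mulExt_sub,
    mulExt_one, mulExt_indicator_disjoint]

theorem mulExt_coverFn_closed_form
    {L R : Type*} [Fintype L] [Fintype R] [DecidableEq L] [DecidableEq R]
    (E : Finset (L × R)) (p : R → ℝ) (hp : ∀ v, 0 ≤ p v)
    (y : L → ℝ) (hy : ∀ u, 0 ≤ y u ∧ y u ≤ 1) :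
    mulExt (coverFn E p) y =
      ∑ v : R, p v *
        (1 - ∏ u ∈ Finset.univ.filter (fun u : L => (u, v) ∈ E), (1 - y u)) :=
  mulExt_coverFn_closed_form_general E p y
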